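/- (Coherence bound in the CNN memorization model, part 1.) There exist absolute constants K, K₀ > 0 with the following property. In the signal-plus-noise Hessian model, let the noise vectors ξ_1,…,ξ_{n_r+n_f} be drawn i.i.d. from N(0, σ_n² I_d), set SNR = ‖μ‖/(σ_n √d), let the retain set consist of samples 1,…,n_r and the forget set of samples n_r+1,…,n_r+n_f, fix weights C'_r, C'_f > 0 with C'_r + C'_f = 1, and build the mix-coherence matrix S with entries S_{(r,f),(r',f')} = ‖D_{rf}^{1/2} D_{r'f'}^{1/2}‖_F where D_{rf} = C'_r H_r + C'_f H_f. Then for every δ ∈ (0,1), whenever n_r, n_f, d ≥ K₀ and d ≥ K₀ log((n_r + n_f)/δ), with probability at least 1 − 8δ over the noise draws, uniformly over all choices of labels y_i, weights ℓ''_i ∈ [0,1] and indicator bits: λ_max(S) ≤ K n_r n_f d σ_n² ( (√C'_r + √C'_f)² SNR² + (C'_r + C'_f) ). -/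

import Mathlib

open Matrix Filter Finset Set
open scoped BigOperators

noncomputable section

/-- Frobenius norm of a real square matrix. -/
def frob {n : Type*} [Fintype n] (M : Matrix n n ℝ) : ℝ :=
  Real.sqrt (∑ i, ∑ j, (M i j) ^ 2)

open Classical in
/-- The positive semidefinite square root of a matrix (junk value `0` on non-PSD input). -/
def psdSqrt {n : Type*} [Fintype n] [DecidableEq n] (A : Matrix n n ℝ) : Matrix n n ℝ :=
  if h : A.PosSemidef then
    h.1.eigenvectorUnitary.1 * diagonal (Real.sqrt ∘ h.1.eigenvalues) *
      (star h.1.eigenvectorUnitary : Matrix n n ℝ)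
  else 0

open Classical in
/-- The largest eigenvalue of a symmetric real matrix (junk value `0` otherwise). -/
def lamMax {n : Type*} [Fintype n] [DecidableEq n] (A : Matrix n n ℝ) : ℝ :=
  if h : A.IsHermitian then ⨆ i, h.eigenvalues i else 0

/-- Probability of observing the Bernoulli(B/n) selection pattern `x`. -/
def selProb (n B : ℕ) (x : Fin n → Bool) : ℝ :=
  ∏ i, if x i then (B : ℝ) / n else 1 - (B : ℝ) / n

/-- Average Hessian of a family. -/
def Hbar {d n : ℕ} (H : Fin n → Matrix (Fin d) (Fin d) ℝ) : Matrix (Fin d) (Fin d) ℝ :=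
  (n : ℝ)⁻¹ • ∑ i, H i

/-- Mean update operator `J = I − η(1−α)H_R + ηα H_F`. -/
def Jbar {d nr nf : ℕ} (η α : ℝ) (HR : Fin nr → Matrix (Fin d) (Fin d) ℝ)
    (HF : Fin nf → Matrix (Fin d) (Fin d) ℝ) : Matrix (Fin d) (Fin d) ℝ :=
  1 - (η * (1 - α)) • Hbar HR + (η * α) • Hbar HF

/-- Random update operator for the batch-selection pattern `x`. -/
def Jop {d nr nf : ℕ} (η α : ℝ) (B : ℕ) (HR : Fin nr → Matrix (Fin d) (Fin d) ℝ)
    (HF : Fin nf → Matrix (Fin d) (Fin d) ℝ)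
    (x : (Fin nr → Bool) × (Fin nf → Bool)) : Matrix (Fin d) (Fin d) ℝ :=
  1 - (η * (1 - α) / B) • (∑ r, if x.1 r then HR r else 0)
    + (η * α / B) • (∑ f, if x.2 f then HF f else 0)

/-- `C_r = η²(1−α)²(1/n_r)(1/B − 1/n_r)`. -/
def Crc (η α : ℝ) (B nr : ℕ) : ℝ :=
  η ^ 2 * (1 - α) ^ 2 * (nr : ℝ)⁻¹ * ((B : ℝ)⁻¹ - (nr : ℝ)⁻¹)

/-- `C_f = η²α²(1/n_f)(1/B − 1/n_f)`. -/
def Cfc (η α : ℝ) (B nf : ℕ) : ℝ :=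
  η ^ 2 * α ^ 2 * (nf : ℝ)⁻¹ * ((B : ℝ)⁻¹ - (nf : ℝ)⁻¹)

/-- Noise-accumulation matrices `N_k`. -/
def Nmat {d nr nf : ℕ} (η α : ℝ) (B : ℕ) (HR : Fin nr → Matrix (Fin d) (Fin d) ℝ)
    (HF : Fin nf → Matrix (Fin d) (Fin d) ℝ) : ℕ → Matrix (Fin d) (Fin d) ℝ
  | 0 => 1
  | k + 1 =>
      Cfc η α B nf • ∑ f, HF f * Nmat η α B HR HF k * HF f
        + Crc η α B nr • ∑ r, HR r * Nmat η α B HR HF k * HR r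

/-- `W_k = J_{k−1} ⋯ J_1 J_0` for a finite sequence of batch selections. -/
def Wk {d nr nf : ℕ} (η α : ℝ) (B : ℕ) (HR : Fin nr → Matrix (Fin d) (Fin d) ℝ)
    (HF : Fin nf → Matrix (Fin d) (Fin d) ℝ) {k : ℕ}
    (s : Fin k → (Fin nr → Bool) × (Fin nf → Bool)) : Matrix (Fin d) (Fin d) ℝ :=
  (List.ofFn fun i => Jop η α B HR HF (s i)).reverse.prod

/-- `E‖w_k‖² = E Tr(W_k W_kᵀ)`, the expectation taken over the i.i.d. Bernoulli
batch selections of the `k` steps. -/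
def Ewk2 {d nr nf : ℕ} (η α : ℝ) (B : ℕ) (HR : Fin nr → Matrix (Fin d) (Fin d) ℝ)
    (HF : Fin nf → Matrix (Fin d) (Fin d) ℝ) (k : ℕ) : ℝ :=
  ∑ s : Fin k → (Fin nr → Bool) × (Fin nf → Bool),
    (∏ i, selProb nr B (s i).1 * selProb nf B (s i).2) *
      (Wk η α B HR HF s * (Wk η α B HR HF s)ᵀ).trace

/-- `E[(e₁ᵀ w_k)²]`, i.e. the `(i0,i0)` entry of `E[W_k W_kᵀ]`. -/
def Ee1 {d nr nf : ℕ} (η α : ℝ) (B : ℕ) (HR : Fin nr → Matrix (Fin d) (Fin d) ℝ)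
    (HF : Fin nf → Matrix (Fin d) (Fin d) ℝ) (i0 : Fin d) (k : ℕ) : ℝ :=
  ∑ s : Fin k → (Fin nr → Bool) × (Fin nf → Bool),
    (∏ i, selProb nr B (s i).1 * selProb nf B (s i).2) *
      ((Wk η α B HR HF s * (Wk η α B HR HF s)ᵀ) i0 i0)

/-- Mixed Hessian `D_{rf} = C'_r H_r^R + C'_f H_f^F` for a retain/forget pair. -/
def Drf {d nr nf : ℕ} (Cr' Cf' : ℝ) (HR : Fin nr → Matrix (Fin d) (Fin d) ℝ)
    (HF : Fin nf → Matrix (Fin d) (Fin d) ℝ) (p : Fin nr × Fin nf) :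
    Matrix (Fin d) (Fin d) ℝ :=
  Cr' • HR p.1 + Cf' • HF p.2

/-- Mix-Hessian `D = (1/(n_r n_f)) Σ_{r,f} D_{rf}`. -/
def Dmix {d nr nf : ℕ} (Cr' Cf' : ℝ) (HR : Fin nr → Matrix (Fin d) (Fin d) ℝ)
    (HF : Fin nf → Matrix (Fin d) (Fin d) ℝ) : Matrix (Fin d) (Fin d) ℝ :=
  ((nr : ℝ) * nf)⁻¹ • ∑ p : Fin nr × Fin nf, Drf Cr' Cf' HR HF p

/-- Mix-coherence matrix `S_{(r,f),(r',f')} = ‖D_{rf}^{1/2} D_{r'f'}^{1/2}‖_F`. -/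
def Smat {d nr nf : ℕ} (Cr' Cf' : ℝ) (HR : Fin nr → Matrix (Fin d) (Fin d) ℝ)
    (HF : Fin nf → Matrix (Fin d) (Fin d) ℝ) :
    Matrix (Fin nr × Fin nf) (Fin nr × Fin nf) ℝ :=
  Matrix.of fun p q =>
    frob (psdSqrt (Drf Cr' Cf' HR HF p) * psdSqrt (Drf Cr' Cf' HR HF q))

/-- Unlearning coherence `σ = λ_max(S) / max_{(r,f)} λ_max(D_{rf})`. -/
def cohSigma {d nr nf : ℕ} (Cr' Cf' : ℝ) (HR : Fin nr → Matrix (Fin d) (Fin d) ℝ)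
    (HF : Fin nf → Matrix (Fin d) (Fin d) ℝ) : ℝ :=
  lamMax (Smat Cr' Cf' HR HF) / ⨆ p : Fin nr × Fin nf, lamMax (Drf Cr' Cf' HR HF p)

/-- Stacked filter-weight vector of the two-layer ReLU CNN signal-plus-noise model. -/
def wvec (d mfil : ℕ) (μ ξi : Fin d → ℝ) (yi : ℝ)
    (ai bi : Bool → Fin mfil → Bool) : (Bool × Fin mfil) × Fin d → ℝ :=
  fun p =>
    ((if p.1.1 then (1 : ℝ) else -1) / mfil) *
      ((if ai p.1.1 p.1.2 then (1 : ℝ) else 0) * μ p.2 +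
        (if bi p.1.1 p.1.2 then (1 : ℝ) else 0) * yi * ξi p.2)

/-- Per-sample Hessian `H_i = ℓ''_i w_i w_iᵀ` of the signal-plus-noise model. -/
def hessCNN (d mfil : ℕ) (μ ξi : Fin d → ℝ) (yi ℓi : ℝ)
    (ai bi : Bool → Fin mfil → Bool) :
    Matrix ((Bool × Fin mfil) × Fin d) ((Bool × Fin mfil) × Fin d) ℝ :=
  ℓi • vecMulVec (wvec d mfil μ ξi yi ai bi) (wvec d mfil μ ξi yi ai bi)

/-- Mixed Hessian `D_{rf} = C'_r H_r + C'_f H_{n_r+f}` in the CNN model, with the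
retain set given by the first `n_r` samples and the forget set by the last `n_f`. -/
def DrfCNN (d mfil nr nf : ℕ) (μ : Fin d → ℝ) (ξ : Fin (nr + nf) → Fin d → ℝ)
    (y ℓ : Fin (nr + nf) → ℝ) (a b : Fin (nr + nf) → Bool → Fin mfil → Bool)
    (Cr' Cf' : ℝ) (p : Fin nr × Fin nf) :
    Matrix ((Bool × Fin mfil) × Fin d) ((Bool × Fin mfil) × Fin d) ℝ :=
  Cr' • hessCNN d mfil μ (ξ (Fin.castAdd nf p.1)) (y (Fin.castAdd nf p.1))
        (ℓ (Fin.castAdd nf p.1)) (a (Fin.castAdd nf p.1)) (b (Fin.castAdd nf p.1))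
    + Cf' • hessCNN d mfil μ (ξ (Fin.natAdd nr p.2)) (y (Fin.natAdd nr p.2))
        (ℓ (Fin.natAdd nr p.2)) (a (Fin.natAdd nr p.2)) (b (Fin.natAdd nr p.2))

/-- Mix-coherence matrix of the CNN model. -/
def SmatCNN (d mfil nr nf : ℕ) (μ : Fin d → ℝ) (ξ : Fin (nr + nf) → Fin d → ℝ)
    (y ℓ : Fin (nr + nf) → ℝ) (a b : Fin (nr + nf) → Bool → Fin mfil → Bool)
    (Cr' Cf' : ℝ) : Matrix (Fin nr × Fin nf) (Fin nr × Fin nf) ℝ :=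
  Matrix.of fun p q =>
    frob (psdSqrt (DrfCNN d mfil nr nf μ ξ y ℓ a b Cr' Cf' p) *
      psdSqrt (DrfCNN d mfil nr nf μ ξ y ℓ a b Cr' Cf' q))

/-!
Each `D_{rf}` is positive semidefinite, so
`‖D_p^{1/2} D_q^{1/2}‖_F ≤ ‖D_p^{1/2}‖_F ‖D_q^{1/2}‖_F = √(tr D_p · tr D_q)`, and by Gershgorin
`λ_max(S)` is at most `n_r n_f` times the largest trace. As `tr H_i ≤ ‖w_i‖² ≤ 4(‖μ‖² + ‖ξ_i‖²)`,
it remains to have `‖ξ_i‖² < 8σ_n² d` for every sample. A Chernoff bound for the `χ²` variable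
`‖ξ_i‖²/σ_n²` bounds each failure probability by `e^{-d}`, and a union bound over the
`n_r + n_f` samples together with `d ≥ log((n_r + n_f)/δ)` keeps the total below `δ`.
-/

section Frobenius

attribute [local instance] Matrix.frobeniusNormedAddCommGroup

variable {n : Type*} [Fintype n]

lemma frob_eq_frobenius_norm (M : Matrix n n ℝ) : frob M = ‖M‖ := by
  rw [frob, Matrix.frobenius_norm_def, Real.sqrt_eq_rpow]
  simp only [Real.norm_eq_abs, Real.rpow_two, sq_abs]

lemma frob_mul_le (M N : Matrix n n ℝ) : frob (M * N) ≤ frob M * frob N := by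
  simpa only [frob_eq_frobenius_norm] using Matrix.frobenius_norm_mul M N

lemma frob_transpose (M : Matrix n n ℝ) : frob Mᵀ = frob M := by
  simp only [frob_eq_frobenius_norm, Matrix.frobenius_norm_transpose]

end Frobenius

section PsdSqrt

variable {n : Type*} [Fintype n] [DecidableEq n] {A : Matrix n n ℝ}

lemma psdSqrt_eq (hA : A.PosSemidef) : psdSqrt A =
    hA.1.eigenvectorUnitary.1 * diagonal (Real.sqrt ∘ hA.1.eigenvalues) *
      (star hA.1.eigenvectorUnitary : Matrix n n ℝ) := dif_pos hA

lemma transpose_psdSqrt (hA : A.PosSemidef) : (psdSqrt A)ᵀ = psdSqrt A := by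
  have hD : (diagonal (Real.sqrt ∘ hA.1.eigenvalues)).PosSemidef :=
    PosSemidef.diagonal fun i => Real.sqrt_nonneg _
  have h := (hD.mul_mul_conjTranspose_same (hA.1.eigenvectorUnitary : Matrix n n ℝ)).1
  rwa [← Matrix.star_eq_conjTranspose, ← psdSqrt_eq hA, Matrix.IsHermitian,
    Matrix.conjTranspose_eq_transpose_of_trivial] at h

lemma psdSqrt_mul_self (hA : A.PosSemidef) : psdSqrt A * psdSqrt A = A := by
  set U : Matrix n n ℝ := (hA.1.eigenvectorUnitary : Matrix n n ℝ)
  have hU : star U * U = 1 := Unitary.coe_star_mul_self _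
  have hDD : diagonal (Real.sqrt ∘ hA.1.eigenvalues) * diagonal (Real.sqrt ∘ hA.1.eigenvalues)
      = Matrix.diagonal (RCLike.ofReal ∘ hA.1.eigenvalues) := by
    rw [diagonal_mul_diagonal]
    congr 1
    funext i
    exact Real.mul_self_sqrt (hA.eigenvalues_nonneg i)
  conv_rhs => rw [hA.1.spectral_theorem, Unitary.conjStarAlgAut_apply]
  calc psdSqrt A * psdSqrt A
      = U * (diagonal (Real.sqrt ∘ hA.1.eigenvalues) * (star U * U) *
          diagonal (Real.sqrt ∘ hA.1.eigenvalues)) * star U := by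
        simp only [psdSqrt_eq hA, Matrix.mul_assoc]; rfl
    _ = _ := by rw [hU, Matrix.mul_one, hDD]

lemma frob_psdSqrt (hA : A.PosSemidef) : frob (psdSqrt A) = Real.sqrt A.trace := by
  rw [frob]
  congr 1
  conv_rhs => rw [← psdSqrt_mul_self hA]
  refine Finset.sum_congr rfl fun i _ => ?_
  simp only [Matrix.diag_apply, Matrix.mul_apply]
  refine Finset.sum_congr rfl fun k _ => ?_
  rw [sq, ← Matrix.transpose_apply (psdSqrt A) k i, transpose_psdSqrt hA]

lemma frob_psdSqrt_mul_psdSqrt_le {B : Matrix n n ℝ} (hA : A.PosSemidef) (hB : B.PosSemidef)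
    {T : ℝ} (hAT : A.trace ≤ T) (hBT : B.trace ≤ T) :
    frob (psdSqrt A * psdSqrt B) ≤ T :=
  calc frob (psdSqrt A * psdSqrt B)
      ≤ Real.sqrt A.trace * Real.sqrt B.trace := by
        simpa only [frob_psdSqrt hA, frob_psdSqrt hB] using frob_mul_le (psdSqrt A) (psdSqrt B)
    _ ≤ Real.sqrt T * Real.sqrt T := by gcongr
    _ = T := Real.mul_self_sqrt (hA.trace_nonneg.trans hAT)

end PsdSqrt

lemma lamMax_le_card_mul_of_abs_le {n : Type*} [Fintype n] [DecidableEq n] {A : Matrix n n ℝ}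
    (hA : A.IsHermitian) {T : ℝ} (hT : ∀ p q, |A p q| ≤ T) :
    lamMax A ≤ Fintype.card n * T := by
  rw [lamMax, dif_pos hA]
  rcases isEmpty_or_nonempty n with hn | hn
  · simp
  refine ciSup_le fun i => ?_
  have heig : Module.End.HasEigenvalue (Matrix.toLin' A) (hA.eigenvalues i) := by
    rw [Module.End.hasEigenvalue_iff_mem_spectrum, Matrix.spectrum_toLin']
    exact hA.eigenvalues_mem_spectrum_real i
  obtain ⟨k, hk⟩ := eigenvalue_mem_ball heig
  rw [Metric.mem_closedBall, Real.dist_eq] at hk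
  calc hA.eigenvalues i ≤ A k k + ∑ j ∈ univ.erase k, ‖A k j‖ := by
        linarith [le_abs_self (hA.eigenvalues i - A k k)]
    _ ≤ ∑ j, |A k j| := by
        rw [← Finset.add_sum_erase _ _ (Finset.mem_univ k)]
        exact add_le_add (le_abs_self _) le_rfl
    _ ≤ ∑ _j : n, T := Finset.sum_le_sum fun j _ => hT k j
    _ = Fintype.card n * T := by simp

/-- `Smat` and `SmatCNN` unfold to instances of this. -/
def coherenceMatrix {ι n : Type*} [Fintype n] [DecidableEq n] (D : ι → Matrix n n ℝ) :
    Matrix ι ι ℝ :=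
  Matrix.of fun p q => frob (psdSqrt (D p) * psdSqrt (D q))

section Coherence

variable {ι n : Type*} [Fintype n] [DecidableEq n] {D : ι → Matrix n n ℝ}

lemma coherenceMatrix_isHermitian (hD : ∀ p, (D p).PosSemidef) :
    (coherenceMatrix D).IsHermitian := by
  ext p q
  simp only [coherenceMatrix, Matrix.conjTranspose_apply, Matrix.of_apply, star_trivial]
  rw [← frob_transpose, Matrix.transpose_mul, transpose_psdSqrt (hD p),
    transpose_psdSqrt (hD q)]

lemma lamMax_coherenceMatrix_le [Fintype ι] [DecidableEq ι] (hD : ∀ p, (D p).PosSemidef)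
    {T : ℝ} (hT : ∀ p, (D p).trace ≤ T) :
    lamMax (coherenceMatrix D) ≤ Fintype.card ι * T :=
  lamMax_le_card_mul_of_abs_le (coherenceMatrix_isHermitian hD) fun p q =>
    (abs_of_nonneg (Real.sqrt_nonneg _)).trans_le
      (frob_psdSqrt_mul_psdSqrt_le (hD p) (hD q) (hT p) (hT q))

end Coherence

section CNN

variable {d mfil : ℕ} (μ ξi : Fin d → ℝ) {yi ℓi : ℝ} (ai bi : Bool → Fin mfil → Bool)

lemma sq_wvec_le (hy : yi = 1 ∨ yi = -1) (p : (Bool × Fin mfil) × Fin d) :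
    wvec d mfil μ ξi yi ai bi p ^ 2 ≤ 2 * (μ p.2 ^ 2 + ξi p.2 ^ 2) / (mfil : ℝ) ^ 2 := by
  have hsign : (if p.1.1 then (1 : ℝ) else -1) ^ 2 = 1 := by split_ifs <;> norm_num
  have hy2 : yi ^ 2 = 1 := by rcases hy with rfl | rfl <;> norm_num
  have hsum : ((if ai p.1.1 p.1.2 then (1 : ℝ) else 0) * μ p.2 +
      (if bi p.1.1 p.1.2 then (1 : ℝ) else 0) * yi * ξi p.2) ^ 2
        ≤ 2 * (μ p.2 ^ 2 + ξi p.2 ^ 2) := by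
    split_ifs <;> nlinarith [sq_nonneg (μ p.2 - yi * ξi p.2), sq_nonneg (μ p.2),
      sq_nonneg (ξi p.2)]
  rw [wvec, mul_pow, div_pow, hsign, one_div_mul_eq_div]
  gcongr

lemma sum_sq_wvec_le (hm : 1 ≤ mfil) (hy : yi = 1 ∨ yi = -1) :
    ∑ p, wvec d mfil μ ξi yi ai bi p ^ 2 ≤ 4 * (∑ c, μ c ^ 2 + ∑ c, ξi c ^ 2) := by
  have hm' : (1 : ℝ) ≤ mfil := by exact_mod_cast hm
  calc ∑ p, wvec d mfil μ ξi yi ai bi p ^ 2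
      ≤ ∑ p : (Bool × Fin mfil) × Fin d, 2 * (μ p.2 ^ 2 + ξi p.2 ^ 2) / (mfil : ℝ) ^ 2 :=
        Finset.sum_le_sum fun p _ => sq_wvec_le μ ξi ai bi hy p
    _ = 4 * (∑ c, μ c ^ 2 + ∑ c, ξi c ^ 2) / mfil := by
        simp only [Fintype.sum_prod_type_right, Finset.sum_const, Finset.card_univ,
          Fintype.card_prod, Fintype.card_bool, Fintype.card_fin, nsmul_eq_mul,
          ← Finset.sum_div, ← Finset.mul_sum, Finset.sum_add_distrib]
        push_cast
        field_simp
        ring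
    _ ≤ 4 * (∑ c, μ c ^ 2 + ∑ c, ξi c ^ 2) := div_le_self (by positivity) hm'

lemma posSemidef_hessCNN (hℓ : 0 ≤ ℓi) : (hessCNN d mfil μ ξi yi ℓi ai bi).PosSemidef := by
  rw [hessCNN]
  simpa using (Matrix.posSemidef_vecMulVec_self_star (wvec d mfil μ ξi yi ai bi)).smul hℓ

lemma trace_hessCNN_le (hm : 1 ≤ mfil) (hy : yi = 1 ∨ yi = -1) (hℓ : ℓi ∈ Set.Icc (0 : ℝ) 1) :
    (hessCNN d mfil μ ξi yi ℓi ai bi).trace ≤ 4 * (∑ c, μ c ^ 2 + ∑ c, ξi c ^ 2) := by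
  rw [hessCNN, Matrix.trace_smul, Matrix.trace_vecMulVec, smul_eq_mul]
  have hw : wvec d mfil μ ξi yi ai bi ⬝ᵥ wvec d mfil μ ξi yi ai bi
      = ∑ p, wvec d mfil μ ξi yi ai bi p ^ 2 := by simp only [dotProduct, sq]
  have hle := sum_sq_wvec_le μ ξi ai bi hm hy
  have hnn : 0 ≤ ∑ p, wvec d mfil μ ξi yi ai bi p ^ 2 := by positivity
  rw [hw]
  nlinarith [hℓ.1, hℓ.2]

end CNN

lemma lamMax_SmatCNN_le {d mfil nr nf : ℕ} (hm : 1 ≤ mfil) (μ : Fin d → ℝ)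
    (ξ : Fin (nr + nf) → Fin d → ℝ) {R : ℝ} (hξ : ∀ i, ∑ c, ξ i c ^ 2 ≤ R)
    (y ℓ : Fin (nr + nf) → ℝ) (a b : Fin (nr + nf) → Bool → Fin mfil → Bool)
    (hy : ∀ i, y i = 1 ∨ y i = -1) (hℓ : ∀ i, ℓ i ∈ Set.Icc (0 : ℝ) 1)
    {Cr' Cf' : ℝ} (hCr : 0 ≤ Cr') (hCf : 0 ≤ Cf') (hsum : Cr' + Cf' = 1) :
    lamMax (SmatCNN d mfil nr nf μ ξ y ℓ a b Cr' Cf') ≤ nr * nf * (4 * (∑ c, μ c ^ 2 + R)) := by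
  set H := fun i => hessCNN d mfil μ (ξ i) (y i) (ℓ i) (a i) (b i)
  have hH : ∀ i, (H i).PosSemidef := fun i => posSemidef_hessCNN _ _ _ _ (hℓ i).1
  have htr : ∀ i, (H i).trace ≤ 4 * (∑ c, μ c ^ 2 + R) := fun i =>
    (trace_hessCNN_le μ (ξ i) (a i) (b i) hm (hy i) (hℓ i)).trans (by linarith [hξ i])
  have hD : ∀ p, (DrfCNN d mfil nr nf μ ξ y ℓ a b Cr' Cf' p).PosSemidef := fun p =>
    ((hH _).smul hCr).add ((hH _).smul hCf)
  have hDtr : ∀ p, (DrfCNN d mfil nr nf μ ξ y ℓ a b Cr' Cf' p).trace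
      ≤ 4 * (∑ c, μ c ^ 2 + R) := fun p => by
    change (Cr' • H _ + Cf' • H _).trace ≤ _
    rw [Matrix.trace_add, Matrix.trace_smul, Matrix.trace_smul, smul_eq_mul, smul_eq_mul]
    calc _ ≤ Cr' * (4 * (∑ c, μ c ^ 2 + R)) + Cf' * (4 * (∑ c, μ c ^ 2 + R)) := by
          gcongr <;> apply htr
      _ = 4 * (∑ c, μ c ^ 2 + R) := by rw [← add_mul, hsum, one_mul]
  exact (lamMax_coherenceMatrix_le hD hDtr).trans_eq (by simp [mul_assoc])

section Gaussian

open MeasureTheory ProbabilityTheory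
open scoped NNReal

variable {v : ℝ≥0}

lemma integral_exp_sq_gaussianReal (hv : v ≠ 0) :
    ∫ x, Real.exp ((4 * v : ℝ)⁻¹ * x ^ 2) ∂gaussianReal 0 v = Real.sqrt 2 := by
  have hv' : (0 : ℝ) < v := by positivity
  have hdens : ∀ x, gaussianPDFReal 0 v x • Real.exp ((4 * v : ℝ)⁻¹ * x ^ 2)
      = (Real.sqrt (2 * Real.pi * v))⁻¹ * Real.exp (-(4 * v : ℝ)⁻¹ * x ^ 2) := fun x => by
    rw [gaussianPDFReal, smul_eq_mul, mul_assoc, ← Real.exp_add]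
    congr 2
    field_simp
    ring
  rw [integral_gaussianReal_eq_integral_smul hv, integral_congr_ae (ae_of_all _ hdens),
    integral_const_mul, integral_gaussian, div_inv_eq_mul,
    show Real.pi * (4 * v) = 2 * (2 * Real.pi * v) by ring, Real.sqrt_mul zero_le_two,
    mul_comm (Real.sqrt 2), inv_mul_cancel_left₀ (by positivity)]

variable {Ω : Type*} [MeasurableSpace Ω] {P : Measure Ω}

lemma mgf_sq_of_map_eq_gaussianReal {X : Ω → ℝ} (hX : P.map X = gaussianReal 0 v)
    (hv : v ≠ 0) : mgf (fun ω => X ω ^ 2) P (4 * v : ℝ)⁻¹ = Real.sqrt 2 := by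
  have hXm : AEMeasurable X P := .of_map_ne_zero (hX ▸ IsProbabilityMeasure.ne_zero _)
  rw [mgf, ← integral_exp_sq_gaussianReal hv, ← hX, integral_map hXm (by fun_prop)]

/-- Chernoff at `t = 1/(4σ²)`, where the moment generating function of each square is `√2`. -/
lemma measureReal_sum_sq_ge_le_exp {ι : Type*} [Fintype ι] {X : ι → Ω → ℝ}
    (hind : iIndepFun X P) (hX : ∀ i, P.map (X i) = gaussianReal 0 v) (hv : v ≠ 0) :
    P.real {ω | 8 * v * Fintype.card ι ≤ ∑ i, X i ω ^ 2} ≤ Real.exp (-Fintype.card ι) := by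
  have := hind.isProbabilityMeasure
  set n := Fintype.card ι
  set Y : ι → Ω → ℝ := fun i ω => X i ω ^ 2
  have hY : iIndepFun Y P := hind.comp (fun _ x => x ^ 2) fun _ => by fun_prop
  have hYm : ∀ i, AEMeasurable (Y i) P := fun i =>
    (AEMeasurable.of_map_ne_zero ((hX i) ▸ IsProbabilityMeasure.ne_zero _)).pow_const 2
  have hmgf : mgf (∑ i, Y i) P (4 * v : ℝ)⁻¹ = Real.sqrt 2 ^ n := by
    rw [hY.mgf_sum₀ hYm, Finset.prod_congr rfl fun i _ => mgf_sq_of_map_eq_gaussianReal (hX i) hv,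
      Finset.prod_const, Finset.card_univ]
  have hint : Integrable (fun ω => Real.exp ((4 * v : ℝ)⁻¹ * (∑ i, Y i) ω)) P := by
    by_contra h
    rw [mgf, integral_undef h] at hmgf
    exact (pow_pos (Real.sqrt_pos.mpr zero_lt_two) n).ne hmgf
  have hset : {ω | 8 * v * n ≤ ∑ i, X i ω ^ 2} = {ω | 8 * v * n ≤ (∑ i, Y i) ω} := by
    simp only [Y, Finset.sum_apply]
  have hsqrt2 : Real.sqrt 2 ≤ Real.exp 1 :=
    Real.sqrt_le_iff.mpr ⟨(Real.exp_pos 1).le, by nlinarith [Real.add_one_le_exp 1]⟩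
  have hv' : (0 : ℝ) < v := by positivity
  calc P.real {ω | 8 * v * n ≤ ∑ i, X i ω ^ 2}
      ≤ Real.exp (-(4 * v : ℝ)⁻¹ * (8 * v * n)) * Real.sqrt 2 ^ n := by
        rw [hset, ← hmgf]
        exact measure_ge_le_exp_mul_mgf _ (by positivity) hint
    _ ≤ Real.exp (-2 * n) * Real.exp 1 ^ n := by
        rw [show -(4 * v : ℝ)⁻¹ * (8 * v * n) = -2 * n by field_simp; ring]
        gcongr
    _ = Real.exp (-n) := by rw [← Real.exp_nat_mul, ← Real.exp_add]; ring_nf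

lemma one_sub_card_mul_exp_le_measureReal {ι κ : Type*} [Fintype ι]
    [Fintype κ] {ξ : ι → κ → Ω → ℝ} (hind : iIndepFun (fun p : ι × κ => ξ p.1 p.2) P)
    (hξ : ∀ i c, P.map (ξ i c) = gaussianReal 0 v) (hv : v ≠ 0) :
    1 - Fintype.card ι * Real.exp (-Fintype.card κ)
      ≤ P.real {ω | ∀ i, ∑ c, ξ i c ω ^ 2 < 8 * v * Fintype.card κ} := by
  have := hind.isProbabilityMeasure
  set G := {ω | ∀ i, ∑ c, ξ i c ω ^ 2 < 8 * v * Fintype.card κ}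
  have hbad : Gᶜ ⊆ ⋃ i, {ω | 8 * v * Fintype.card κ ≤ ∑ c, ξ i c ω ^ 2} := fun ω hω => by
    simpa [G] using hω
  have hrow : ∀ i, P.real {ω | 8 * v * Fintype.card κ ≤ ∑ c, ξ i c ω ^ 2}
      ≤ Real.exp (-Fintype.card κ) := fun i =>
    measureReal_sum_sq_ge_le_exp
      (hind.precomp (g := Prod.mk i) (Prod.mk_right_injective i)) (hξ i) hv
  have hcover : 1 ≤ P.real G + P.real Gᶜ := by
    simpa only [Set.union_compl_self, probReal_univ] using measureReal_union_le (μ := P) G Gᶜ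
  calc 1 - Fintype.card ι * Real.exp (-Fintype.card κ)
      = 1 - ∑ _i : ι, Real.exp (-Fintype.card κ) := by simp
    _ ≤ 1 - ∑ i, P.real {ω | 8 * v * Fintype.card κ ≤ ∑ c, ξ i c ω ^ 2} := by
        gcongr with i; exact hrow i
    _ ≤ 1 - P.real Gᶜ := by
        gcongr
        exact (measureReal_mono hbad).trans (measureReal_iUnion_fintype_le _)
    _ ≤ P.real G := by linarith

end Gaussian

lemma mul_exp_neg_le_of_log_div_le {n δ d : ℝ} (hn : 0 < n) (hδ : 0 < δ)
    (h : Real.log (n / δ) ≤ d) : n * Real.exp (-d) ≤ δ := by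
  rw [Real.log_le_iff_le_exp (div_pos hn hδ), div_le_iff₀ hδ] at h
  rw [Real.exp_neg, ← div_eq_mul_inv, div_le_iff₀ (Real.exp_pos d)]
  linarith

lemma add_le_mul_snr_sq {M σ d c : ℝ} (hM : 0 ≤ M) (hσ : 0 < σ) (hd : 0 < d) (hc : 1 ≤ c) :
    M + σ ^ 2 * d ≤ d * σ ^ 2 * (c * (Real.sqrt M / (σ * Real.sqrt d)) ^ 2 + 1) := by
  rw [div_pow, mul_pow, Real.sq_sqrt hM, Real.sq_sqrt hd.le, mul_add,
    show d * σ ^ 2 * (c * (M / (σ ^ 2 * d))) = c * M by field_simp]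
  nlinarith

open MeasureTheory ProbabilityTheory in
/-- coherence bound in the CNN memorization model, part 1.
There are absolute constants `K, K₀ > 0` such that, with i.i.d. `N(0, σ_n² I_d)` noise,
for every `δ ∈ (0,1)`, whenever `n_r, n_f, d ≥ K₀` and `d ≥ K₀ log((n_r+n_f)/δ)`, with
probability at least `1 − 8δ`, uniformly over labels, weights and indicator bits,
`λ_max(S) ≤ K n_r n_f d σ_n² ((√C'_r + √C'_f)² SNR² + (C'_r + C'_f))`. -/
theorem stmt5 :
    ∃ K K₀ : ℝ, 0 < K ∧ 0 < K₀ ∧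
      ∀ (d nr nf mfil : ℕ), 1 ≤ mfil →
      ∀ (μ : Fin d → ℝ) (σn : ℝ), 0 < σn →
      ∀ (Cr' Cf' : ℝ), 0 < Cr' → 0 < Cf' → Cr' + Cf' = 1 →
      ∀ δ : ℝ, δ ∈ Set.Ioo (0 : ℝ) 1 →
      K₀ ≤ (nr : ℝ) → K₀ ≤ (nf : ℝ) → K₀ ≤ (d : ℝ) →
      K₀ * Real.log (((nr : ℝ) + nf) / δ) ≤ (d : ℝ) →
      ∀ (Ω : Type) (_ : MeasurableSpace Ω) (P : Measure Ω), IsProbabilityMeasure P →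
      ∀ ξ : Fin (nr + nf) → Fin d → Ω → ℝ,
        iIndepFun
          (fun (p : Fin (nr + nf) × Fin d) ω => ξ p.1 p.2 ω) P →
        (∀ i c, Measure.map (ξ i c) P = gaussianReal 0 ⟨σn ^ 2, sq_nonneg σn⟩) →
        ENNReal.ofReal (1 - 8 * δ) ≤
          P {ω | ∀ (y ℓ : Fin (nr + nf) → ℝ)
              (a b : Fin (nr + nf) → Bool → Fin mfil → Bool),
              (∀ i, y i = 1 ∨ y i = -1) → (∀ i, ℓ i ∈ Set.Icc (0 : ℝ) 1) →
              lamMax (SmatCNN d mfil nr nf μ (fun i c => ξ i c ω) y ℓ a b Cr' Cf') ≤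
                K * nr * nf * d * σn ^ 2 *
                  ((Real.sqrt Cr' + Real.sqrt Cf') ^ 2 *
                      (Real.sqrt (∑ c, (μ c) ^ 2) / (σn * Real.sqrt d)) ^ 2
                    + (Cr' + Cf'))} := by
  refine ⟨32, 1, by norm_num, by norm_num, ?_⟩
  intro d nr nf mfil hm μ σn hσ Cr' Cf' hCr hCf hsum δ hδ hnr hnf hd hlog Ω _ P _ ξ hind hmap
  have hv : (⟨σn ^ 2, sq_nonneg σn⟩ : NNReal) ≠ 0 := fun h => by simp [hσ.ne'] at h
  have hfew : ((nr + nf : ℕ) : ℝ) * Real.exp (-d) ≤ δ :=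
    mul_exp_neg_le_of_log_div_le (by push_cast; linarith) hδ.1 (by push_cast; linarith)
  have hgood := one_sub_card_mul_exp_le_measureReal hind hmap hv
  simp only [Fintype.card_fin] at hgood
  refine (ENNReal.ofReal_le_ofReal (by linarith [hδ.1])).trans
    ((ofReal_measureReal (measure_ne_top P _)).trans_le (measure_mono fun ω hω => ?_))
  intro y ℓ a b hy hℓ
  have hc : 1 ≤ (Real.sqrt Cr' + Real.sqrt Cf') ^ 2 := by
    nlinarith [Real.sq_sqrt hCr.le, Real.sq_sqrt hCf.le, Real.sqrt_nonneg Cr',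
      Real.sqrt_nonneg Cf']
  have hsnr :=
    add_le_mul_snr_sq (by positivity : 0 ≤ ∑ c, μ c ^ 2) hσ (by linarith : (0 : ℝ) < d) hc
  have hM : 0 ≤ (nr : ℝ) * nf * ∑ c, μ c ^ 2 := by positivity
  refine (lamMax_SmatCNN_le hm μ _ (R := 8 * σn ^ 2 * d) (fun i => (hω i).le) y ℓ a b hy hℓ
    hCr.le hCf.le hsum).trans ?_
  rw [hsum]
  nlinarith [mul_le_mul_of_nonneg_left hsnr (by positivity : (0 : ℝ) ≤ 32 * nr * nf)]
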